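/- arXiv:2005.04707 — 2 statements merged into one kernel-verified Lean document; each statement's English description precedes it below -/
import Mathlib

section
/- Let n be a positive integer and let g ∈ ℝⁿ satisfy g_i ≥ 0 for all i. Then the function F(p) = √( Σ_{i=1}^n (1 − (1 + g_i p_i)^{−2}) ) is concave on the nonnegative orthant {p ∈ ℝⁿ : p_i ≥ 0 for all i}. (Equivalently, −F is convex, so the dispersion penalty V̄ = a·Q^{−1}(ε)·F is concave for any a·Q^{−1}(ε) ≥ 0.) -/
/-!
Each summand is `1 - t⁻²`, a concave function of `t > 0`, evaluated at the affine function
`t = 1 + gᵢ pᵢ`, which is positive on the orthant; so the sum is concave and nonnegative there.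
Composing with the monotone concave `√` preserves concavity.
-/

open Set

lemma ConcaveOn.sqrt {E : Type*} [AddCommGroup E] [Module ℝ E] {s : Set E} {f : E → ℝ}
    (hf : ConcaveOn ℝ s f) (hf₀ : ∀ x ∈ s, 0 ≤ f x) : ConcaveOn ℝ s fun x => √(f x) :=
  ⟨hf.1, fun x hx y hy a b ha hb hab =>
    calc a • √(f x) + b • √(f y) ≤ √(a • f x + b • f y) :=
          Real.strictConcaveOn_sqrt.concaveOn.2 (hf₀ x hx) (hf₀ y hy) ha hb hab
      _ ≤ √(f (a • x + b • y)) := Real.sqrt_le_sqrt (hf.2 hx hy ha hb hab)⟩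

lemma ConcaveOn.finset_sum {E ι : Type*} [AddCommGroup E] [Module ℝ E] {s : Set E}
    (hs : Convex ℝ s) {t : Finset ι} {f : ι → E → ℝ} (hf : ∀ i ∈ t, ConcaveOn ℝ s (f i)) :
    ConcaveOn ℝ s fun x => ∑ i ∈ t, f i x := by
  simpa only [← Finset.sum_apply] using
    Finset.sum_induction f (ConcaveOn ℝ s) (fun _ _ => ConcaveOn.add) (concaveOn_const 0 hs) hf

lemma concaveOn_one_sub_inv_sq : ConcaveOn ℝ (Ioi 0) fun t : ℝ => 1 - (t ^ 2)⁻¹ :=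
  ((concaveOn_const 1 (convex_Ioi 0)).sub (convexOn_zpow (-2))).congr fun t _ => by
    simp [zpow_neg]

lemma concaveOn_one_sub_inv_sq_one_add_mul_apply {ι : Type*} {c : ℝ} (hc : 0 ≤ c) (i : ι) :
    ConcaveOn ℝ (Ici 0) fun p : ι → ℝ => 1 - ((1 + c * p i) ^ 2)⁻¹ := by
  let A : (ι → ℝ) →ᵃ[ℝ] ℝ := AffineMap.const ℝ _ 1 + (c • LinearMap.proj i).toAffineMap
  refine (concaveOn_one_sub_inv_sq.comp_affineMap A).subset (fun p hp => ?_) (convex_Ici 0)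
  show 0 < 1 + c * p i
  linarith [mul_nonneg hc (hp i)]

theorem sqrt_sum_dispersion_concaveOn_general (n : ℕ) (g : Fin n → ℝ)
    (hg : ∀ i, 0 ≤ g i) :
    ConcaveOn ℝ {p : Fin n → ℝ | ∀ i, 0 ≤ p i}
      (fun p => Real.sqrt (∑ i, (1 - ((1 + g i * p i) ^ 2)⁻¹))) := by
  have hsum : ConcaveOn ℝ (Ici 0) fun p : Fin n → ℝ => ∑ i, (1 - ((1 + g i * p i) ^ 2)⁻¹) :=
    ConcaveOn.finset_sum (convex_Ici 0) fun i _ =>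
      concaveOn_one_sub_inv_sq_one_add_mul_apply (hg i) i
  refine hsum.sqrt fun p hp => Finset.sum_nonneg fun i _ => ?_
  have hbase : 1 ≤ 1 + g i * p i := le_add_of_nonneg_right (mul_nonneg (hg i) (hp i))
  exact sub_nonneg.2 (inv_le_one_of_one_le₀ (one_le_pow₀ hbase))

/-- For `g ∈ ℝⁿ` with `gᵢ ≥ 0`, the function
`F(p) = √(∑ᵢ (1 − (1 + gᵢ pᵢ)⁻²))` is concave on the nonnegative orthant. -/
theorem sqrt_sum_dispersion_concaveOn (n : ℕ) (hn : 0 < n) (g : Fin n → ℝ)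
    (hg : ∀ i, 0 ≤ g i) :
    ConcaveOn ℝ {p : Fin n → ℝ | ∀ i, 0 ≤ p i}
      (fun p => Real.sqrt (∑ i, (1 - ((1 + g i * p i) ^ 2)⁻¹))) :=
  sqrt_sum_dispersion_concaveOn_general n g hg
end

section
/- Let n be a positive integer, g ∈ ℝⁿ with g_i ≥ 0 for all i, and define F(p) = √( Σ_{j=1}^n (1 − (1 + g_j p_j)^{−2}) ). Let p, p⁰ ∈ ℝⁿ with p_j ≥ 0 and p⁰_j ≥ 0 for all j, and suppose F(p⁰) > 0. Then F(p) ≤ F(p⁰) + Σ_{i=1}^n [ g_i·(1 + g_i p⁰_i)^{−3} / F(p⁰) ]·(p_i − p⁰_i), i.e., the first-order Taylor expansion of F around p⁰ globally overestimates F on the nonnegative orthant. -/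
/-! Both `x ↦ 1 - x⁻²` on `(0, ∞)` and `√` are concave, so each lies below its tangent lines;
summing the termwise tangent bounds for `1 - (1 + gⱼ pⱼ)⁻²` and then applying the tangent bound
of `√` at `F(p⁰)²` gives the claim. -/

open Finset

theorem Real.sqrt_le_sqrt_add_sub_div {s s₀ : ℝ} (hs : 0 ≤ s) (hs₀ : 0 < s₀) :
    √s ≤ √s₀ + (s - s₀) / (2 * √s₀) := by
  have h₀ : 0 < √s₀ := Real.sqrt_pos.2 hs₀
  rw [← sub_le_iff_le_add', le_div_iff₀ (by positivity)]
  nlinarith [sq_nonneg (√s - √s₀), Real.sq_sqrt hs, Real.sq_sqrt hs₀.le]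

theorem one_sub_inv_sq_le_tangent {a b : ℝ} (ha : 0 < a) (hb : 0 < b) :
    1 - (b ^ 2)⁻¹ ≤ 1 - (a ^ 2)⁻¹ + 2 * (a ^ 3)⁻¹ * (b - a) := by
  have gap : 1 - (a ^ 2)⁻¹ + 2 * (a ^ 3)⁻¹ * (b - a) - (1 - (b ^ 2)⁻¹) =
      (b - a) ^ 2 * (2 * b + a) / (a ^ 3 * b ^ 2) := by
    field_simp
    ring
  have : 0 ≤ (b - a) ^ 2 * (2 * b + a) / (a ^ 3 * b ^ 2) := by positivity
  linarith

section

variable {ι : Type*} [Fintype ι] {g p p₀ : ι → ℝ}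

theorem sum_one_sub_inv_sq_nonneg (h : ∀ i, 0 ≤ g i * p i) :
    0 ≤ ∑ i, (1 - ((1 + g i * p i) ^ 2)⁻¹) := by
  refine sum_nonneg fun i _ => sub_nonneg.2 (inv_le_one_of_one_le₀ ?_)
  nlinarith [h i]

theorem sum_one_sub_inv_sq_le_tangent (hp : ∀ i, 0 < 1 + g i * p i)
    (hp₀ : ∀ i, 0 < 1 + g i * p₀ i) :
    ∑ i, (1 - ((1 + g i * p i) ^ 2)⁻¹) ≤
      ∑ i, (1 - ((1 + g i * p₀ i) ^ 2)⁻¹) +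
        ∑ i, 2 * (g i * ((1 + g i * p₀ i) ^ 3)⁻¹) * (p i - p₀ i) := by
  rw [← sum_add_distrib]
  gcongr with i
  calc 1 - ((1 + g i * p i) ^ 2)⁻¹
      ≤ 1 - ((1 + g i * p₀ i) ^ 2)⁻¹ +
          2 * ((1 + g i * p₀ i) ^ 3)⁻¹ * ((1 + g i * p i) - (1 + g i * p₀ i)) :=
        one_sub_inv_sq_le_tangent (hp₀ i) (hp i)
    _ = _ := by ring

end

theorem dispersion_taylor_overestimate_general (n : ℕ) (g : Fin n → ℝ)
    (hg : ∀ i, 0 ≤ g i) (p p0 : Fin n → ℝ) (hp : ∀ j, 0 ≤ p j) (hp0 : ∀ j, 0 ≤ p0 j)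
    (hFpos : 0 < Real.sqrt (∑ j, (1 - ((1 + g j * p0 j) ^ 2)⁻¹))) :
    Real.sqrt (∑ j, (1 - ((1 + g j * p j) ^ 2)⁻¹)) ≤
      Real.sqrt (∑ j, (1 - ((1 + g j * p0 j) ^ 2)⁻¹)) +
        ∑ i, (g i * ((1 + g i * p0 i) ^ 3)⁻¹ /
          Real.sqrt (∑ j, (1 - ((1 + g j * p0 j) ^ 2)⁻¹))) * (p i - p0 i) := by
  have hgp : ∀ j, 0 ≤ g j * p j := fun j => mul_nonneg (hg j) (hp j)
  have hgp0 : ∀ j, 0 ≤ g j * p0 j := fun j => mul_nonneg (hg j) (hp0 j)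
  have hsum := sum_one_sub_inv_sq_le_tangent (g := g) (p := p) (p₀ := p0)
    (fun j => by linarith [hgp j]) (fun j => by linarith [hgp0 j])
  set s₀ := ∑ j, (1 - ((1 + g j * p0 j) ^ 2)⁻¹)
  refine (Real.sqrt_le_sqrt_add_sub_div (sum_one_sub_inv_sq_nonneg hgp)
    (Real.sqrt_pos.1 hFpos)).trans ?_
  gcongr
  rw [div_le_iff₀ (by positivity), sum_mul]
  calc _ ≤ ∑ i, 2 * (g i * ((1 + g i * p0 i) ^ 3)⁻¹) * (p i - p0 i) := by linarith
    _ = _ := sum_congr rfl fun i _ => by field_simp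

/-- The first-order Taylor expansion of
`F(p) = √(∑ⱼ (1 − (1 + gⱼ pⱼ)⁻²))` around `p⁰` globally overestimates `F` on the
nonnegative orthant (provided `F(p⁰) > 0`). -/
theorem dispersion_taylor_overestimate (n : ℕ) (hn : 0 < n) (g : Fin n → ℝ)
    (hg : ∀ i, 0 ≤ g i) (p p0 : Fin n → ℝ) (hp : ∀ j, 0 ≤ p j) (hp0 : ∀ j, 0 ≤ p0 j)
    (hFpos : 0 < Real.sqrt (∑ j, (1 - ((1 + g j * p0 j) ^ 2)⁻¹))) :
    Real.sqrt (∑ j, (1 - ((1 + g j * p j) ^ 2)⁻¹)) ≤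
      Real.sqrt (∑ j, (1 - ((1 + g j * p0 j) ^ 2)⁻¹)) +
        ∑ i, (g i * ((1 + g i * p0 i) ^ 3)⁻¹ /
          Real.sqrt (∑ j, (1 - ((1 + g j * p0 j) ^ 2)⁻¹))) * (p i - p0 i) :=
  dispersion_taylor_overestimate_general n g hg p p0 hp hp0 hFpos
end
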